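/- arXiv:2508.18062 — 5 statements merged into one kernel-verified Lean document; each statement's English description precedes it below -/
import Mathlib

section
/- Let C be a covering system with distinct moduli, all of which are at most B. Let p be a prime and a a positive integer such that p^a(p+1) > B. Then the set obtained from C by discarding all arithmetic progressions whose modulus is divisible by p^a is still a covering system. -/
/-- A covering system: a finite set of arithmetic progressions, each encoded as a pair
`(a, m)` representing `a mod m = {a + k*m : k ∈ ℤ}` with modulus `m ≥ 1`, such that
every integer belongs to at least one of the progressions. -/
def IsCoveringSystem (C : Finset (ℤ × ℕ)) : Prop :=
  (∀ q ∈ C, 1 ≤ q.2) ∧ ∀ x : ℤ, ∃ q ∈ C, (q.2 : ℤ) ∣ x - q.1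

/-- The moduli of the progressions in `C` are pairwise distinct. -/
def HasDistinctModuli (C : Finset (ℤ × ℕ)) : Prop :=
  ∀ q ∈ C, ∀ r ∈ C, q.2 = r.2 → q = r

/-!
Suppose `x` escapes every kept progression. Choose a common multiple `L` of the kept moduli with
`v_p(L) = a - 1`; then every `x + L t` escapes the kept progressions too. A discarded modulus
has the form `p^a k` with `1 ≤ k ≤ p`, and by distinctness at most `p - 1` of them differ from
`p^(a+1)`. Among `x + L t`, `0 ≤ t < p`, which are pairwise incongruent mod `p^a`, one avoids the
residues mod `p^a` of these `p - 1` progressions, and so does its translate by `L p`. Those two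
integers differ by `L p`, which `p^(a+1)` does not divide, so they cannot both lie in the
progression of modulus `p^(a+1)`. One of them is therefore not covered by `C`.
-/

lemma Prime.dvd_of_pow_succ_dvd_mul {α : Type*} [CommMonoidWithZero α] [IsCancelMulZero α]
    {p L z : α} (hp : Prime p) {c : ℕ} (hL : p ^ c ∣ L) (hL' : ¬ p ^ (c + 1) ∣ L)
    (h : p ^ (c + 1) ∣ L * z) : p ∣ z := by
  obtain ⟨m, rfl⟩ := hL
  rw [pow_succ, mul_assoc] at h
  rw [pow_succ] at hL'
  have hm : ¬ p ∣ m := fun hpm => hL' (mul_dvd_mul_left _ hpm)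
  exact ((hp.dvd_or_dvd ((mul_dvd_mul_iff_left (pow_ne_zero c hp.ne_zero)).1 h))).resolve_left hm

lemma Finset.exists_common_multiple_not_pow_succ_dvd {ι : Type*} (s : Finset ι) (f : ι → ℕ)
    (hf : ∀ i ∈ s, f i ≠ 0) {p c : ℕ} (hp : p.Prime) (h : ∀ i ∈ s, ¬ p ^ (c + 1) ∣ f i) :
    ∃ L : ℤ, (∀ i ∈ s, (f i : ℤ) ∣ L) ∧ (p : ℤ) ^ c ∣ L ∧ ¬ (p : ℤ) ^ (c + 1) ∣ L := by
  have hs : s.lcm f ≠ 0 := by simpa [Finset.lcm_eq_zero_iff] using hf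
  have hL : Nat.lcm (s.lcm f) (p ^ c) ≠ 0 := Nat.lcm_ne_zero hs (pow_ne_zero c hp.ne_zero)
  have hfac : (Nat.lcm (s.lcm f) (p ^ c)).factorization p = c := by
    rw [Nat.factorization_lcm hs (pow_ne_zero c hp.ne_zero), Finsupp.sup_apply,
      Finset.factorization_lcm hf, Nat.factorization_pow_self hp, sup_eq_right, Finset.sup_le_iff]
    intro i hi
    by_contra! hlt
    exact h i hi ((hp.pow_dvd_iff_le_factorization (hf i hi)).2 hlt)
  refine ⟨Nat.lcm (s.lcm f) (p ^ c), fun i hi => ?_, ?_, ?_⟩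
  · exact Int.natCast_dvd_natCast.2 ((Finset.dvd_lcm hi).trans (Nat.dvd_lcm_left _ _))
  · exact_mod_cast Nat.dvd_lcm_right _ _
  · rw [← Nat.cast_pow, Int.natCast_dvd_natCast, hp.pow_dvd_iff_le_factorization hL, hfac]
    omega

lemma exists_lt_forall_not_pow_succ_dvd {p c : ℕ} (hp : p.Prime) {L : ℤ}
    (hL : (p : ℤ) ^ c ∣ L) (hL' : ¬ (p : ℤ) ^ (c + 1) ∣ L) (x : ℤ) (S : Finset ℤ)
    (hS : S.card < p) : ∃ t < p, ∀ r ∈ S, ¬ (p : ℤ) ^ (c + 1) ∣ x + L * t - r := by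
  by_contra! h
  choose! r hrS hr using fun t (ht : t ∈ Finset.range p) => h t (Finset.mem_range.1 ht)
  obtain ⟨t₁, ht₁, t₂, ht₂, hne, heq⟩ :=
    Finset.exists_ne_map_eq_of_card_lt_of_maps_to (by simpa using hS) hrS
  have hdiff : (p : ℤ) ^ (c + 1) ∣ L * ((t₂ : ℤ) - t₁) := by
    have := dvd_sub (hr t₂ ht₂) (hr t₁ ht₁)
    rwa [heq, show x + L * t₂ - r t₂ - (x + L * t₁ - r t₂) = L * ((t₂ : ℤ) - t₁) by ring] at this
  have hmod : t₁ ≡ t₂ [MOD p] := Int.natCast_modEq_iff.1 (Int.modEq_iff_dvd.2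
    (Prime.dvd_of_pow_succ_dvd_mul (Nat.prime_iff_prime_int.1 hp) hL hL' hdiff))
  exact hne (hmod.eq_of_lt_of_lt (Finset.mem_range.1 ht₁) (Finset.mem_range.1 ht₂))

lemma card_filter_dvd_ne_mul_le {C : Finset (ℤ × ℕ)} (hC : HasDistinctModuli C) {d n : ℕ}
    (hpos : ∀ q ∈ C, 1 ≤ q.2) (hlt : ∀ q ∈ C, q.2 < d * (n + 1)) :
    (C.filter fun q => d ∣ q.2 ∧ q.2 ≠ d * n).card ≤ n - 1 := by
  have hmaps : ∀ q ∈ C.filter (fun q => d ∣ q.2 ∧ q.2 ≠ d * n),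
      q.2 ∈ (Finset.Ico 1 n).image (d * ·) := by
    intro q hq
    obtain ⟨hqC, ⟨k, hk⟩, hne⟩ := Finset.mem_filter.1 hq
    have hk1 : 1 ≤ k := Nat.pos_of_ne_zero fun h => by simpa [hk, h] using hpos q hqC
    have hkn : k < n + 1 := Nat.lt_of_mul_lt_mul_left (hk ▸ hlt q hqC)
    have hkn' : k ≠ n := fun h => hne (by rw [hk, h])
    exact Finset.mem_image.2 ⟨k, Finset.mem_Ico.2 ⟨hk1, by omega⟩, hk.symm⟩
  have hinj : Set.InjOn Prod.snd (C.filter fun q => d ∣ q.2 ∧ q.2 ≠ d * n) :=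
    fun q hq r hr => hC q (Finset.mem_filter.1 hq).1 r (Finset.mem_filter.1 hr).1
  calc (C.filter fun q => d ∣ q.2 ∧ q.2 ≠ d * n).card
      ≤ ((Finset.Ico 1 n).image (d * ·)).card := Finset.card_le_card_of_injOn _ hmaps hinj
    _ ≤ (Finset.Ico 1 n).card := Finset.card_image_le
    _ = n - 1 := Nat.card_Ico 1 n

lemma exists_mem_modulus_eq_of_not_dvd {C : Finset (ℤ × ℕ)}
    (hcov : ∀ y : ℤ, ∃ q ∈ C, (q.2 : ℤ) ∣ y - q.1) {d n : ℕ} (y : ℤ)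
    (hK : ∀ q ∈ C, ¬ d ∣ q.2 → ¬ (q.2 : ℤ) ∣ y - q.1)
    (hR : ∀ q ∈ C, d ∣ q.2 → q.2 ≠ d * n → ¬ (d : ℤ) ∣ y - q.1) :
    ∃ q ∈ C, q.2 = d * n ∧ (q.2 : ℤ) ∣ y - q.1 := by
  obtain ⟨q, hqC, hq⟩ := hcov y
  refine ⟨q, hqC, ?_, hq⟩
  by_contra hne
  by_cases hd : d ∣ q.2
  · exact hR q hqC hd hne ((Int.natCast_dvd_natCast.2 hd).trans hq)
  · exact hK q hqC hd hq

/-- If all moduli of a distinct covering system are at most `B`, `p` is prime,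
`a ≥ 1`, and `p^a * (p+1) > B`, then discarding all progressions whose modulus is
divisible by `p^a` still leaves a covering system. -/
theorem discard_high_prime_power (C : Finset (ℤ × ℕ))
    (hC : IsCoveringSystem C) (hdist : HasDistinctModuli C)
    (B : ℕ) (hB : ∀ q ∈ C, q.2 ≤ B)
    (p a : ℕ) (hp : p.Prime) (ha : 1 ≤ a) (hpa : B < p ^ a * (p + 1)) :
    IsCoveringSystem (C.filter (fun q => ¬ p ^ a ∣ q.2)) := by
  obtain ⟨hpos, hcov⟩ := hC
  refine ⟨fun q hq => hpos q (Finset.mem_filter.1 hq).1, fun x => ?_⟩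
  by_contra! hx
  obtain ⟨c, rfl⟩ : ∃ c, a = c + 1 := ⟨a - 1, by omega⟩
  obtain ⟨L, hKL, hcL, hcL'⟩ :=
    (C.filter fun q => ¬ p ^ (c + 1) ∣ q.2).exists_common_multiple_not_pow_succ_dvd Prod.snd
      (fun q hq => by have := hpos q (Finset.mem_filter.1 hq).1; omega) hp
      (fun q hq => (Finset.mem_filter.1 hq).2)
  have hLp : (p : ℤ) ^ (c + 1) ∣ L * p := pow_succ (p : ℤ) c ▸ mul_dvd_mul_right hcL _
  set R := C.filter fun q => p ^ (c + 1) ∣ q.2 ∧ q.2 ≠ p ^ (c + 1) * p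
  have hR : (R.image Prod.fst).card < p := Finset.card_image_le.trans_lt
    ((card_filter_dvd_ne_mul_le hdist hpos fun q hq => (hB q hq).trans_lt hpa).trans_lt
      (Nat.sub_lt hp.pos one_pos))
  obtain ⟨t, -, ht⟩ := exists_lt_forall_not_pow_succ_dvd hp hcL hcL' x (R.image Prod.fst) hR
  have hcovered (s : ℤ) : ∃ q ∈ C, q.2 = p ^ (c + 1) * p ∧ (q.2 : ℤ) ∣ x + L * t + L * p * s - q.1 := by
    refine exists_mem_modulus_eq_of_not_dvd hcov _ (fun q hq hd => ?_) (fun q hq hd hne => ?_)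
    · have hqK : q ∈ C.filter fun q => ¬ p ^ (c + 1) ∣ q.2 := Finset.mem_filter.2 ⟨hq, hd⟩
      rw [show x + L * t + L * p * s - q.1 = x - q.1 + L * (t + p * s) by ring,
        dvd_add_left ((hKL q hqK).mul_right _)]
      exact hx q hqK
    · rw [add_sub_right_comm, Nat.cast_pow, dvd_add_left (hLp.mul_right s)]
      exact ht q.1 (Finset.mem_image_of_mem _ (Finset.mem_filter.2 ⟨hq, hd, hne⟩))
  obtain ⟨q₀, hq₀C, hq₀, h₀⟩ := hcovered 0
  obtain ⟨q₁, hq₁C, hq₁, h₁⟩ := hcovered 1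
  obtain rfl := hdist q₀ hq₀C q₁ hq₁C (hq₀.trans hq₁.symm)
  have hLp' : (p : ℤ) ^ (c + 1) * p ∣ L * p := by
    have := dvd_sub h₁ h₀
    rw [hq₀, show x + L * t + L * p * 1 - q₀.1 - (x + L * t + L * p * 0 - q₀.1) = L * p by ring]
      at this
    exact_mod_cast this
  exact hcL' ((mul_dvd_mul_iff_right (by exact_mod_cast hp.ne_zero)).1 hLp')
end

section
/- Let C be a covering system, p a prime, and a a positive integer. Let C_{p^a} be the subset of C consisting of all arithmetic progressions whose modulus is divisible by p^a, and suppose |C_{p^a}| = p, with the moduli of the progressions in C_{p^a} being p^a·m_1, ..., p^a·m_p. Then there exists a residue b such that (C \ C_{p^a}) ∪ {b mod p^{a-1}·lcm(m_1,...,m_p)} is a covering system; that is, the p progressions of C_{p^a} can be replaced by a single arithmetic progression with modulus p^{a-1}·lcm(m_1,...,m_p) and the resulting set is still a covering system. -/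
/-- If exactly `p` progressions of a covering system `C` have modulus divisible by
`p^a` (with `p` prime, `a ≥ 1`), say with moduli `p^a * m₁, …, p^a * m_p`, then these
`p` progressions can be replaced by a single progression with modulus
`p^(a-1) * lcm(m₁, …, m_p)`, and the result is still a covering system. -/
theorem replace_prime_power_progressions (C : Finset (ℤ × ℕ))
    (hC : IsCoveringSystem C) (p a : ℕ) (hp : p.Prime) (ha : 1 ≤ a)
    (hcard : (C.filter (fun q => p ^ a ∣ q.2)).card = p) :
    ∃ b : ℤ, IsCoveringSystem
      (insert
        (b, p ^ (a - 1) * (C.filter (fun q => p ^ a ∣ q.2)).lcm (fun q => q.2 / p ^ a))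
        (C \ C.filter (fun q => p ^ a ∣ q.2))) := by
  classical
  obtain ⟨hC1, hC2⟩ := hC
  have hp0 : 0 < p := hp.pos
  set F := C.filter (fun q => p ^ a ∣ q.2) with hF
  have hFC : F ⊆ C := Finset.filter_subset _ _
  set m : ℤ × ℕ → ℕ := fun q => q.2 / p ^ a with hm
  set L := F.lcm m with hLdef
  -- each q ∈ F has q.2 = p^a * m q with m q ≠ 0
  have hFfact : ∀ q ∈ F, q.2 = p ^ a * m q ∧ m q ≠ 0 := by
    intro q hq
    obtain ⟨hqC, hdvd⟩ := Finset.mem_filter.mp hq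
    have h1 : q.2 = p ^ a * m q := (Nat.mul_div_cancel' hdvd).symm
    refine ⟨h1, fun h0 => ?_⟩
    have := hC1 q hqC
    rw [h1, h0, mul_zero] at this
    omega
  have hL0 : L ≠ 0 := by
    intro h
    rw [hLdef, Finset.lcm_eq_zero_iff] at h
    obtain ⟨q, hq, hq0⟩ := h
    exact (hFfact q hq).2 hq0
  set N := C.lcm (fun q => q.2) with hNdef
  have hN0 : N ≠ 0 := by
    intro h
    rw [hNdef, Finset.lcm_eq_zero_iff] at h
    obtain ⟨q, hq, hq0⟩ := h
    have := hC1 q hq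
    omega
  set K := N / p ^ N.factorization p with hKdef
  have hpK : ¬ p ∣ K := Nat.not_dvd_ordCompl hp hN0
  set P : ℕ := p ^ (a - 1) * K with hPdef
  -- every modulus not divisible by p^a divides P
  have hDP : ∀ q ∈ C, ¬ p ^ a ∣ q.2 → q.2 ∣ P := by
    intro q hq hnd
    have hq0 : q.2 ≠ 0 := by have := hC1 q hq; omega
    have hqN : q.2 ∣ N := Finset.dvd_lcm hq
    have hv : q.2.factorization p ≤ a - 1 := by
      by_contra hlt
      push_neg at hlt
      exact hnd (dvd_trans (pow_dvd_pow p (by omega)) (Nat.ordProj_dvd q.2 p))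
    calc q.2 = p ^ q.2.factorization p * (q.2 / p ^ q.2.factorization p) :=
          (Nat.ordProj_mul_ordCompl_eq_self q.2 p).symm
      _ ∣ p ^ (a-1) * K :=
          mul_dvd_mul (pow_dvd_pow p hv) (Nat.ordCompl_dvd_ordCompl_of_dvd hqN p)
  -- NC x : x is not covered by C \ F
  set NC : ℤ → Prop := fun x => ∀ q ∈ C, ¬ p ^ a ∣ q.2 → ¬ (q.2 : ℤ) ∣ x - q.1 with hNC
  have hNCshift : ∀ x : ℤ, NC x → ∀ t : ℤ, NC (x + t * P) := by
    intro x hx t q hq hnd hdvd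
    refine hx q hq hnd ?_
    have hPd : (q.2 : ℤ) ∣ t * P := Dvd.dvd.mul_left (Int.natCast_dvd_natCast.mpr (hDP q hq hnd)) t
    have : x - q.1 = (x + t * P - q.1) - t * P := by ring
    rw [this]
    exact dvd_sub hdvd hPd
  -- key congruence helper: p^a ∣ (t - t') * P implies t ≡ t' mod p
  have hcong : ∀ t t' : ℕ, ((p : ℤ)) ^ a ∣ ((t : ℤ) - t') * P → t ≡ t' [MOD p] := by
    intro t t' h
    have hP : (P : ℤ) = (p : ℤ) ^ (a - 1) * K := by push_cast [hPdef]; ring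
    obtain ⟨c, hc⟩ := h
    have hpow : (p : ℤ) ^ a = (p : ℤ) ^ (a - 1) * p := by
      rw [← pow_succ]; congr 1; omega
    rw [hP, hpow] at hc
    have hne : ((p : ℤ)) ^ (a - 1) ≠ 0 := pow_ne_zero _ (by exact_mod_cast hp0.ne')
    have hc2 : ((t : ℤ) - t') * K = p * c := by
      refine mul_left_cancel₀ hne ?_
      linear_combination hc
    have hpdvd : (p : ℤ) ∣ ((t : ℤ) - t') * K := ⟨c, hc2⟩
    have hprime : Prime (p : ℤ) := Nat.prime_iff_prime_int.mp hp
    rcases hprime.dvd_mul.mp hpdvd with h1 | h1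
    · refine (Nat.modEq_iff_dvd).mpr ?_
      rw [show ((t':ℤ) - t) = -(((t:ℤ) - t')) by ring]
      exact dvd_neg.mpr h1
    · exact absurd (Int.natCast_dvd_natCast.mp h1) hpK
  -- main structural lemma
  have hmain : ∀ x : ℤ, NC x → ∀ q ∈ F,
      (∃ t : ℕ, (q.2 : ℤ) ∣ x + t * P - q.1) ∧ m q ∣ K := by
    intro x hx
    have hcov : ∀ t : ℕ, ∃ q, q ∈ F ∧ (q.2 : ℤ) ∣ x + t * P - q.1 := by
      intro t
      obtain ⟨q, hqC, hdvd⟩ := hC2 (x + t * P)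
      refine ⟨q, ?_, hdvd⟩
      rw [hF, Finset.mem_filter]
      refine ⟨hqC, ?_⟩
      by_contra hnd
      exact hNCshift x hx t q hqC hnd hdvd
    choose g hgF hgd using hcov
    have hpa : ∀ t : ℕ, ((p:ℤ))^a ∣ ((g t).2 : ℤ) := by
      intro t
      exact_mod_cast Int.natCast_dvd_natCast.mpr (Finset.mem_filter.mp (hgF t)).2
    have hsame : ∀ t t' : ℕ, g t = g t' → t ≡ t' [MOD p] := by
      intro t t' he
      have h1 : ((p:ℤ))^a ∣ x + t * P - (g t).1 := dvd_trans (hpa t) (hgd t)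
      have h2 : ((p:ℤ))^a ∣ x + t' * P - (g t).1 := by
        rw [he]; exact dvd_trans (hpa t') (hgd t')
      refine hcong t t' ?_
      have h4 : ((t:ℤ) - t') * P = (x + t * P - (g t).1) - (x + t' * P - (g t).1) := by ring
      rw [h4]; exact dvd_sub h1 h2
    have hinj : Set.InjOn g (Finset.range p) := by
      intro t ht t' ht' he
      have h5 := hsame t t' he
      simp only [Finset.coe_range, Set.mem_Iio] at ht ht'
      rwa [Nat.ModEq, Nat.mod_eq_of_lt ht, Nat.mod_eq_of_lt ht'] at h5
    have himage : (Finset.range p).image g = F := by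
      apply Finset.eq_of_subset_of_card_le
      · intro q hq
        obtain ⟨t, _, rfl⟩ := Finset.mem_image.mp hq
        exact hgF t
      · rw [hcard, Finset.card_image_of_injOn hinj, Finset.card_range]
    intro q hq
    obtain ⟨t, ht, rfl⟩ := Finset.mem_image.mp (himage ▸ hq)
    rw [Finset.mem_range] at ht
    refine ⟨⟨t, hgd t⟩, ?_⟩
    -- show the coverer of x + (t+p) * P is again g t
    obtain ⟨t'', ht'', he''⟩ := Finset.mem_image.mp (himage ▸ hgF (t + p))
    rw [Finset.mem_range] at ht''
    have h6 : t'' ≡ t [MOD p] := by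
      have h7 := hsame t'' (t + p) he''
      calc t'' ≡ t + p [MOD p] := h7
        _ ≡ t + 0 [MOD p] := Nat.ModEq.add_right_cancel' p (by simpa using (Nat.ModEq.refl (t + p)))
        _ = t := by ring
    have ht''t : t'' = t := by
      rwa [Nat.ModEq, Nat.mod_eq_of_lt ht'', Nat.mod_eq_of_lt ht] at h6
    have hgg : g (t + p) = g t := by rw [← he'', ht''t]
    have h8 : ((g t).2 : ℤ) ∣ (p : ℤ) * P := by
      have hgd' : ((g t).2 : ℤ) ∣ x + ((t + p : ℕ) : ℤ) * P - (g t).1 := hgg ▸ hgd (t + p)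
      have h9 : (p : ℤ) * P = (x + ((t + p : ℕ) : ℤ) * P - (g t).1) - (x + t * P - (g t).1) := by
        push_cast; ring
      rw [h9]; exact dvd_sub hgd' (hgd t)
    have h10 : (g t).2 ∣ p ^ a * K := by
      have h11 : (p:ℤ) * P = ((p ^ a * K : ℕ) : ℤ) := by
        push_cast [hPdef]
        rw [show (p:ℤ) * ((p:ℤ)^(a-1) * K) = (p:ℤ)^(a-1+1) * K by rw [pow_succ]; ring]
        congr 2
        omega
      rw [h11] at h8
      exact_mod_cast h8
    have h12 := (hFfact _ (hgF t)).1
    rw [h12] at h10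
    exact (Nat.mul_dvd_mul_iff_left (pow_pos hp0 a)).mp h10
  -- moduli positivity, for any b
  have hmod : ∀ b : ℤ, ∀ q ∈ insert (b, p ^ (a - 1) * L) (C \ F), 1 ≤ q.2 := by
    intro b q hq
    rcases Finset.mem_insert.mp hq with h | h
    · rw [h]
      have : p ^ (a-1) * L ≠ 0 := mul_ne_zero (pow_ne_zero _ hp0.ne') hL0
      omega
    · exact hC1 q (Finset.mem_sdiff.mp h).1
  have hCF : ∀ q, q ∈ C \ F ↔ q ∈ C ∧ ¬ p ^ a ∣ q.2 := by
    intro q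
    rw [Finset.mem_sdiff, hF, Finset.mem_filter]
    tauto
  by_cases hS : ∃ x : ℤ, NC x
  · obtain ⟨x, hx⟩ := hS
    refine ⟨x, hmod x, fun z => ?_⟩
    by_cases hz : ∃ q ∈ C \ F, (q.2 : ℤ) ∣ z - q.1
    · obtain ⟨q, hq, hd⟩ := hz
      exact ⟨q, Finset.mem_insert_of_mem hq, hd⟩
    · push_neg at hz
      have hzNC : NC z := by
        intro q hqC hnd hd
        exact hz q ((hCF q).mpr ⟨hqC, hnd⟩) hd
      -- show the new progression covers z
      refine ⟨(x, p ^ (a-1) * L), Finset.mem_insert_self _ _, ?_⟩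
      have hLK : L ∣ K := Finset.lcm_dvd (fun q hq => (hmain x hx q hq).2)
      have hpL : ¬ p ∣ L := fun h => hpK (h.trans hLK)
      have hcop : (p ^ (a-1)).Coprime L := Nat.Coprime.pow_left _ (hp.coprime_iff_not_dvd.mpr hpL)
      have hdiv : ∀ q ∈ F, (m q : ℤ) ∣ z - x := by
        intro q hq
        obtain ⟨⟨t, hdx⟩, hmK⟩ := hmain x hx q hq
        obtain ⟨⟨s, hdz⟩, -⟩ := hmain z hzNC q hq
        have hmq2 : (m q : ℤ) ∣ (q.2 : ℤ) :=
          Int.natCast_dvd_natCast.mpr ⟨p ^ a, by rw [(hFfact q hq).1]; ring⟩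
        have hmP : (m q : ℤ) ∣ (P : ℤ) :=
          Int.natCast_dvd_natCast.mpr (hmK.trans (dvd_mul_left K _))
        have h13 : (m q : ℤ) ∣ (z - x) + ((s:ℤ) - t) * P := by
          have h14 : (z - x) + ((s:ℤ) - t) * P
              = (z + s * P - q.1) - (x + t * P - q.1) := by ring
          rw [h14]
          exact dvd_sub (hmq2.trans hdz) (hmq2.trans hdx)
        have h15 : (m q : ℤ) ∣ ((s:ℤ) - t) * P := Dvd.dvd.mul_left hmP _
        have := dvd_sub h13 h15
        simpa using this
      have hpdiv : ((p : ℤ)) ^ (a-1) ∣ z - x := by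
        obtain ⟨q0, hq0⟩ : F.Nonempty := Finset.card_pos.mp (by rw [hcard]; exact hp0)
        obtain ⟨⟨t, hdx⟩, -⟩ := hmain x hx q0 hq0
        obtain ⟨⟨s, hdz⟩, -⟩ := hmain z hzNC q0 hq0
        have hpq2 : ((p:ℤ))^(a-1) ∣ (q0.2 : ℤ) := by
          have := (Finset.mem_filter.mp hq0).2
          have h16 : p ^ (a-1) ∣ q0.2 := dvd_trans (pow_dvd_pow p (by omega)) this
          exact_mod_cast Int.natCast_dvd_natCast.mpr h16
        have hpP : ((p:ℤ))^(a-1) ∣ (P : ℤ) := by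
          have h17 : p ^ (a-1) ∣ P := dvd_mul_right _ _
          exact_mod_cast Int.natCast_dvd_natCast.mpr h17
        have h13 : ((p:ℤ))^(a-1) ∣ (z - x) + ((s:ℤ) - t) * P := by
          have h14 : (z - x) + ((s:ℤ) - t) * P
              = (z + s * P - q0.1) - (x + t * P - q0.1) := by ring
          rw [h14]
          exact dvd_sub (hpq2.trans hdz) (hpq2.trans hdx)
        have h15 : ((p:ℤ))^(a-1) ∣ ((s:ℤ) - t) * P := Dvd.dvd.mul_left hpP _
        have := dvd_sub h13 h15
        simpa using this
      -- combine
      have hLdvd : L ∣ (z - x).natAbs := by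
        refine Finset.lcm_dvd (fun q hq => ?_)
        exact Int.natCast_dvd_natCast.mp (Int.dvd_natAbs.mpr (hdiv q hq))
      have hpdvd' : p ^ (a-1) ∣ (z - x).natAbs := by
        refine Int.natCast_dvd_natCast.mp (Int.dvd_natAbs.mpr ?_)
        exact_mod_cast hpdiv
      have hfull : p ^ (a-1) * L ∣ (z - x).natAbs :=
        Nat.Coprime.mul_dvd_of_dvd_of_dvd hcop hpdvd' hLdvd
      exact Int.dvd_natAbs.mp (Int.natCast_dvd_natCast.mpr hfull)
  · push_neg at hS
    refine ⟨0, hmod 0, fun z => ?_⟩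
    have h18 := hS z
    simp only [hNC] at h18
    push_neg at h18
    obtain ⟨q, hqC, hnd, hd⟩ := h18
    exact ⟨q, Finset.mem_insert_of_mem ((hCF q).mpr ⟨hqC, hnd⟩), hd⟩
end

section
/- Let C be a covering system, let L be the least common multiple of the moduli in C, and let p be a prime dividing L. Let 0 ≤ a_1 < a_2 ≤ p−1 be integers, and for α ∈ {0,1,...,p−1} let C_p(α) := {a mod m ∈ C : p | m and a ≡ α (mod p)}. Let t be the unique integer in [0, L) such that t ≡ a_2 − a_1 (mod p^{ν_p(L)}) and t ≡ 0 (mod q^{ν_q(L)}) for each prime q dividing L with q ≠ p, where ν_r(L) denotes the exponent of the prime r in L. Then C' := (C \ (C_p(a_1) ∪ C_p(a_2))) ∪ (C_p(a_1) + t) ∪ (C_p(a_2) − t) is a covering system, where C_p(a_i) ± t denotes translating each arithmetic progression in C_p(a_i) by ±t. -/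
/-- If every prime power `r^(ν_r(L))` with `r ∣ L`, `r ≠ p` divides a nonnegative integer `t`,
then every divisor `m` of `L` not divisible by `p` divides `t`. -/
lemma aux_dvd_t (L p : ℕ) (hL0 : L ≠ 0) (t : ℤ) (ht0 : 0 ≤ t)
    (htr : ∀ r : ℕ, r.Prime → r ∣ L → r ≠ p → (r : ℤ) ^ (L.factorization r) ∣ t)
    (m : ℕ) (hmL : m ∣ L) (hpm : ¬ p ∣ m) : (m : ℤ) ∣ t := by
  obtain ⟨n, rfl⟩ := Int.eq_ofNat_of_zero_le ht0
  rcases eq_or_ne n 0 with rfl | hn0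
  · simp
  have hm0 : m ≠ 0 := fun h => hL0 (by simpa [h] using hmL)
  rw [Int.natCast_dvd_natCast]
  rw [← Nat.factorization_le_iff_dvd hm0 hn0]
  intro r
  rcases eq_or_ne (m.factorization r) 0 with h0 | h0
  · simp [h0]
  have hr : r.Prime := Nat.prime_of_mem_primeFactors (by
    rw [← Nat.support_factorization]; exact Finsupp.mem_support_iff.mpr h0)
  have hrm : r ∣ m := Nat.dvd_of_factorization_pos h0
  have hrp : r ≠ p := fun h => hpm (h ▸ hrm)
  have hrL : r ∣ L := hrm.trans hmL
  have h1 : (r : ℤ) ^ (L.factorization r) ∣ (n : ℤ) := htr r hr hrL hrp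
  have h2 : r ^ (L.factorization r) ∣ n := by exact_mod_cast h1
  have h3 : L.factorization r ≤ n.factorization r :=
    (hr.pow_dvd_iff_le_factorization hn0).mp h2
  have h4 : m.factorization r ≤ L.factorization r :=
    (Nat.factorization_le_iff_dvd hm0 hL0).mpr hmL r
  exact le_trans h4 h3

/-- Let `C` be a covering system with lcm of moduli `L`, let `p` be a prime dividing `L`,
and let `0 ≤ a₁ < a₂ ≤ p - 1`. With `C_p(α)` the set of progressions of `C` whose modulus is
divisible by `p` and whose residue is `≡ α (mod p)`, and `t` the unique integer in `[0, L)`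
with `t ≡ a₂ - a₁ (mod p^(ν_p(L)))` and `t ≡ 0 (mod r^(ν_r(L)))` for all primes `r ∣ L`,
`r ≠ p`, the system obtained by translating `C_p(a₁)` by `t` and `C_p(a₂)` by `-t` is
still a covering system. -/
theorem covering_swap_residue_classes (C : Finset (ℤ × ℕ)) (hC : IsCoveringSystem C)
    (L : ℕ) (hL : L = C.lcm Prod.snd)
    (p : ℕ) (hp : p.Prime) (hpL : p ∣ L)
    (a₁ a₂ : ℤ) (ha₁ : 0 ≤ a₁) (ha₁₂ : a₁ < a₂) (ha₂ : a₂ ≤ (p : ℤ) - 1)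
    (Cp : ℤ → Finset (ℤ × ℕ))
    (hCp : ∀ α : ℤ, Cp α = C.filter (fun q => p ∣ q.2 ∧ (p : ℤ) ∣ q.1 - α))
    (t : ℤ) (ht0 : 0 ≤ t) (htL : t < (L : ℤ))
    (htp : (p : ℤ) ^ (L.factorization p) ∣ t - (a₂ - a₁))
    (htr : ∀ r : ℕ, r.Prime → r ∣ L → r ≠ p → (r : ℤ) ^ (L.factorization r) ∣ t) :
    IsCoveringSystem
      ((C \ (Cp a₁ ∪ Cp a₂))
        ∪ (Cp a₁).image (fun q => (q.1 + t, q.2))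
        ∪ (Cp a₂).image (fun q => (q.1 - t, q.2))) := by
  have hL0 : L ≠ 0 := by
    rw [hL]
    intro h
    rw [Finset.lcm_eq_zero_iff] at h
    obtain ⟨q, hq, hq2⟩ := h
    have := hC.1 q hq
    omega
  -- p divides t - (a₂ - a₁)
  have hkpos : 0 < L.factorization p := hp.factorization_pos_of_dvd hL0 hpL
  have hpt : (p : ℤ) ∣ t - (a₂ - a₁) :=
    dvd_trans (dvd_pow_self (p : ℤ) hkpos.ne') htp
  constructor
  · intro q hq
    simp only [Finset.mem_union, Finset.mem_sdiff, Finset.mem_image] at hq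
    rcases hq with (⟨hq, -⟩ | ⟨r, hr, rfl⟩) | ⟨r, hr, rfl⟩
    · exact hC.1 q hq
    · rw [hCp] at hr
      exact hC.1 r (Finset.mem_filter.mp hr).1
    · rw [hCp] at hr
      exact hC.1 r (Finset.mem_filter.mp hr).1
  · intro x
    by_cases h1 : (p : ℤ) ∣ x - a₁
    · -- x ≡ a₁: use a progression covering x + t, which lies in Cp a₂
      obtain ⟨q, hq, hdvd⟩ := hC.2 (x + t)
      have hqL : q.2 ∣ L := hL ▸ Finset.dvd_lcm hq
      by_cases hpm : p ∣ q.2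
      · have hpq : (p : ℤ) ∣ (x + t) - q.1 :=
          dvd_trans (Int.natCast_dvd_natCast.mpr hpm) hdvd
        have hq2 : q ∈ Cp a₂ := by
          rw [hCp, Finset.mem_filter]
          refine ⟨hq, hpm, ?_⟩
          have : q.1 - a₂ = (x - a₁) + (t - (a₂ - a₁)) - ((x + t) - q.1) := by ring
          rw [this]
          exact dvd_sub (dvd_add h1 hpt) hpq
        refine ⟨(q.1 - t, q.2), ?_, ?_⟩
        · simp only [Finset.mem_union, Finset.mem_image]
          exact Or.inr ⟨q, hq2, rfl⟩
        · simpa [sub_sub_eq_add_sub, show x - (q.1 - t) = (x + t) - q.1 by ring] using hdvd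
      · have hmt : (q.2 : ℤ) ∣ t := aux_dvd_t L p hL0 t ht0 htr q.2 hqL hpm
        refine ⟨q, ?_, ?_⟩
        · simp only [Finset.mem_union, Finset.mem_sdiff]
          refine Or.inl (Or.inl ⟨hq, ?_⟩)
          simp only [Finset.mem_union, hCp, Finset.mem_filter]
          push_neg
          exact ⟨fun _ h => absurd h hpm, fun _ h => absurd h hpm⟩
        · have : x - q.1 = ((x + t) - q.1) - t := by ring
          rw [this]
          exact dvd_sub hdvd hmt
    · by_cases h2 : (p : ℤ) ∣ x - a₂
      · -- x ≡ a₂: use a progression covering x - t, which lies in Cp a₁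
        obtain ⟨q, hq, hdvd⟩ := hC.2 (x - t)
        have hqL : q.2 ∣ L := hL ▸ Finset.dvd_lcm hq
        by_cases hpm : p ∣ q.2
        · have hpq : (p : ℤ) ∣ (x - t) - q.1 :=
            dvd_trans (Int.natCast_dvd_natCast.mpr hpm) hdvd
          have hq1 : q ∈ Cp a₁ := by
            rw [hCp, Finset.mem_filter]
            refine ⟨hq, hpm, ?_⟩
            have : q.1 - a₁ = (x - a₂) - (t - (a₂ - a₁)) - ((x - t) - q.1) := by ring
            rw [this]
            exact dvd_sub (dvd_sub h2 hpt) hpq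
          refine ⟨(q.1 + t, q.2), ?_, ?_⟩
          · simp only [Finset.mem_union, Finset.mem_image]
            exact Or.inl (Or.inr ⟨q, hq1, rfl⟩)
          · simpa [show x - (q.1 + t) = (x - t) - q.1 by ring] using hdvd
        · have hmt : (q.2 : ℤ) ∣ t := aux_dvd_t L p hL0 t ht0 htr q.2 hqL hpm
          refine ⟨q, ?_, ?_⟩
          · simp only [Finset.mem_union, Finset.mem_sdiff]
            refine Or.inl (Or.inl ⟨hq, ?_⟩)
            simp only [Finset.mem_union, hCp, Finset.mem_filter]
            push_neg
            exact ⟨fun _ h => absurd h hpm, fun _ h => absurd h hpm⟩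
          · have : x - q.1 = ((x - t) - q.1) + t := by ring
            rw [this]
            exact dvd_add hdvd hmt
      · -- x ≢ a₁, a₂: the progression of C covering x is untouched
        obtain ⟨q, hq, hdvd⟩ := hC.2 x
        refine ⟨q, ?_, hdvd⟩
        simp only [Finset.mem_union, Finset.mem_sdiff]
        refine Or.inl (Or.inl ⟨hq, ?_⟩)
        simp only [Finset.mem_union, hCp, Finset.mem_filter]
        push_neg
        constructor
        · intro _ hpm hpa
          have hpq : (p : ℤ) ∣ x - q.1 :=
            dvd_trans (Int.natCast_dvd_natCast.mpr hpm) hdvd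
          exact h1 (by have : x - a₁ = (x - q.1) + (q.1 - a₁) := by ring
                       rw [this]; exact dvd_add hpq hpa)
        · intro _ hpm hpa
          have hpq : (p : ℤ) ∣ x - q.1 :=
            dvd_trans (Int.natCast_dvd_natCast.mpr hpm) hdvd
          exact h2 (by have : x - a₂ = (x - q.1) + (q.1 - a₂) := by ring
                       rw [this]; exact dvd_add hpq hpa)
end

section
/- Let m be a positive integer, let p be a prime with p ≥ m, and let L be a positive integer with p ∤ L. Let q > p be the largest prime dividing L. If there exists a covering system with distinct moduli whose set of moduli is exactly the set of divisors of L that are ≥ m, then there exists a covering system with distinct moduli whose set of moduli is exactly the set of divisors of p^{ν_q(L)} · L / q^{ν_q(L)} that are ≥ m, where ν_q(L) denotes the exponent of the prime q in L. -/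
/-!
Write `L = q^e M` with `q ∤ M`. The map `q^j c ↦ p^j c` (`c ∣ M`) is a bijection from the
divisors of `L` onto those of `p^e M`, and since `m ≤ p < q` it preserves the condition `d ≥ m`.
To transport the covering, choose `g : ℤ → ℤ` with `g x ≡ x (mod M)` and `g x` congruent modulo
`q^e` to the base-`q` number whose digits are the base-`p` digits of `x mod p^e`. Then the last
`j` base-`q` digits of `g x` determine `x mod p^j`, so for every divisor `d = q^j c` of `L`,
`g x mod d` determines `x mod p^j c`: the preimage under `g` of a class modulo `d` lies in a single
class modulo `p^j c`, and these classes cover ℤ because the old ones cover the image of `g`.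
-/

namespace Nat

def rebase (p q n : ℕ) : ℕ := ofDigits q (p.digits n)

variable {p q : ℕ}

lemma rebase_eq_mod_add (hp : 2 ≤ p) (n : ℕ) :
    rebase p q n = n % p + q * rebase p q (n / p) := by
  rcases n.eq_zero_or_pos with rfl | hn
  · simp [rebase]
  · rw [rebase, digits_def' hp hn, ofDigits_cons]; rfl

lemma ModEq.of_rebase (hp : 2 ≤ p) (hpq : p ≤ q) {j : ℕ} :
    ∀ {a b : ℕ}, rebase p q a ≡ rebase p q b [MOD q ^ j] → a ≡ b [MOD p ^ j] := by
  induction j with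
  | zero => exact fun _ => modEq_one
  | succ j ih =>
    intro a b h
    rw [rebase_eq_mod_add hp a, rebase_eq_mod_add hp b] at h
    have hlow : a % p = b % p := by
      have h' := h.of_dvd (dvd_pow_self q j.succ_ne_zero)
      rwa [ModEq, add_mul_mod_self_left, add_mul_mod_self_left,
        mod_eq_of_lt ((mod_lt a (by omega)).trans_le hpq),
        mod_eq_of_lt ((mod_lt b (by omega)).trans_le hpq)] at h'
    have hhigh : a / p ≡ b / p [MOD p ^ j] := by
      rw [hlow, pow_succ'] at h
      exact ih (ModEq.mul_left_cancel' (by omega) (ModEq.add_left_cancel' _ h))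
    rw [ModEq, pow_succ', mod_mul, mod_mul, hlow, hhigh]

end Nat

lemma Int.modEq_of_rebase_emod {p q e j : ℕ} (hp : 2 ≤ p) (hpq : p ≤ q) (hj : j ≤ e)
    {x y : ℤ} (h : (Nat.rebase p q (x % p ^ e).toNat : ℤ) ≡
      Nat.rebase p q (y % p ^ e).toNat [ZMOD q ^ j]) :
    x ≡ y [ZMOD p ^ j] := by
  have hpe : (p : ℤ) ^ e ≠ 0 := pow_ne_zero _ (by omega)
  have hres := Int.natCast_modEq_iff.mpr
    (Nat.ModEq.of_rebase hp hpq (Int.natCast_modEq_iff.mp (by exact_mod_cast h)))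
  push_cast at hres
  rw [Int.toNat_of_nonneg (Int.emod_nonneg _ hpe), Int.toNat_of_nonneg (Int.emod_nonneg _ hpe)]
    at hres
  have hdvd : (p : ℤ) ^ j ∣ (p : ℤ) ^ e := pow_dvd_pow _ hj
  exact ((Int.mod_modEq x _).of_dvd hdvd).symm.trans (hres.trans ((Int.mod_modEq y _).of_dvd hdvd))

lemma Int.exists_modEq_and_modEq {m n : ℤ} (h : IsCoprime m n) (a b : ℤ) :
    ∃ z, z ≡ a [ZMOD m] ∧ z ≡ b [ZMOD n] := by
  obtain ⟨u, v, huv⟩ := h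
  refine ⟨a * v * n + b * u * m, Int.modEq_iff_dvd.mpr ⟨(a - b) * u, ?_⟩,
    Int.modEq_iff_dvd.mpr ⟨(b - a) * v, ?_⟩⟩
  · linear_combination (-a) * huv
  · linear_combination (-b) * huv

namespace Nat

def replacePrime (q p d : ℕ) : ℕ := p ^ d.factorization q * ordCompl[q] d

variable {p q d L : ℕ}

lemma not_dvd_ordCompl_of_dvd (hd : d ∣ L) (hpL : ¬ p ∣ L) : ¬ p ∣ ordCompl[q] d :=
  fun h => hpL (h.trans ((ordCompl_dvd d q).trans hd))

lemma factorization_replacePrime (hp : p.Prime) (h : ¬ p ∣ ordCompl[q] d) :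
    (replacePrime q p d).factorization p = d.factorization q := by
  have hc : ordCompl[q] d ≠ 0 := fun h0 => h (h0 ▸ dvd_zero p)
  rw [replacePrime, factorization_mul (pow_ne_zero _ hp.ne_zero) hc]
  simp [hp.factorization_pow, factorization_eq_zero_of_not_dvd h]

lemma ordCompl_replacePrime (hp : p.Prime) (h : ¬ p ∣ ordCompl[q] d) :
    ordCompl[p] (replacePrime q p d) = ordCompl[q] d := by
  rw [replacePrime, ordCompl_self_pow_mul _ _ hp,
    (ordCompl_eq_self_iff_zero_or_not_dvd _ hp).mpr (Or.inr h)]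

lemma replacePrime_replacePrime (hp : p.Prime) (h : ¬ p ∣ ordCompl[q] d) :
    replacePrime p q (replacePrime q p d) = d := by
  rw [replacePrime, ordCompl_replacePrime hp h, factorization_replacePrime hp h,
    ordProj_mul_ordCompl_eq_self]

lemma replacePrime_injOn (hp : p.Prime) :
    Set.InjOn (replacePrime q p) {d | ¬ p ∣ ordCompl[q] d} := fun d hd d' hd' h => by
  rw [← replacePrime_replacePrime hp hd, h, replacePrime_replacePrime hp hd']

lemma replacePrime_ne_zero (hp : p ≠ 0) (hd : d ≠ 0) : replacePrime q p d ≠ 0 :=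
  mul_ne_zero (pow_ne_zero _ hp) (ordCompl_pos q hd).ne'

lemma replacePrime_dvd_replacePrime (hL : L ≠ 0) (hd : d ∣ L) :
    replacePrime q p d ∣ replacePrime q p L :=
  mul_dvd_mul (pow_dvd_pow p ((factorization_le_iff_dvd (ne_zero_of_dvd_ne_zero hL hd) hL).mpr
    hd q)) (ordCompl_dvd_ordCompl_of_dvd hd q)

lemma le_replacePrime_iff {m : ℕ} (hmp : m ≤ p) (hmq : m ≤ q) :
    m ≤ replacePrime q p d ↔ m ≤ d := by
  by_cases hj : d.factorization q = 0
  · simp [replacePrime, hj]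
  · have hd : d ≠ 0 := by rintro rfl; simp at hj
    have hqd : q ≤ d := le_of_dvd (pos_of_ne_zero hd) (dvd_of_factorization_pos hj)
    have hpd : p ≤ replacePrime q p d :=
      (le_self_pow hj p).trans (Nat.le_mul_of_pos_right _ (ordCompl_pos q hd))
    omega

lemma image_replacePrime_divisors (hp : p.Prime) (hq : q.Prime) (hL : L ≠ 0) (hpL : ¬ p ∣ L) :
    L.divisors.image (replacePrime q p) = (replacePrime q p L).divisors := by
  have hpL' : ¬ p ∣ ordCompl[q] L := not_dvd_ordCompl_of_dvd dvd_rfl hpL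
  ext d'
  simp only [Finset.mem_image, mem_divisors]
  constructor
  · rintro ⟨d, ⟨hdL, -⟩, rfl⟩
    exact ⟨replacePrime_dvd_replacePrime hL hdL, replacePrime_ne_zero hp.ne_zero hL⟩
  · rintro ⟨hd', hL'⟩
    have hqL : ¬ q ∣ ordCompl[p] (replacePrime q p L) := by
      rw [ordCompl_replacePrime hp hpL']
      exact not_dvd_ordCompl hq hL
    refine ⟨replacePrime p q d', ⟨?_, hL⟩, replacePrime_replacePrime hq
      fun h => hqL (h.trans (ordCompl_dvd_ordCompl_of_dvd hd' p))⟩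
    exact replacePrime_replacePrime hp hpL' ▸ replacePrime_dvd_replacePrime hL' hd'

lemma image_replacePrime_divisors_filter_le (hp : p.Prime) (hq : q.Prime) (hL : L ≠ 0)
    (hpL : ¬ p ∣ L) {m : ℕ} (hmp : m ≤ p) (hmq : m ≤ q) :
    (L.divisors.filter (m ≤ ·)).image (replacePrime q p) =
      (replacePrime q p L).divisors.filter (m ≤ ·) := by
  rw [← image_replacePrime_divisors hp hq hL hpL, Finset.filter_image]
  simp only [le_replacePrime_iff hmp hmq]

lemma modEq_replacePrime_of_modEq (hp : p.Prime) (hpq : p ≤ q) (hL : L ≠ 0) (hpL : ¬ p ∣ L)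
    {g : ℤ → ℤ} (hg : ∀ x, g x ≡ rebase p q (x % p ^ L.factorization q).toNat
      [ZMOD q ^ L.factorization q] ∧ g x ≡ x [ZMOD ordCompl[q] L])
    {d : ℕ} (hd : d ∣ L) {x y : ℤ} (h : g x ≡ g y [ZMOD d]) :
    x ≡ y [ZMOD replacePrime q p d] := by
  have hj : d.factorization q ≤ L.factorization q :=
    (factorization_le_iff_dvd (ne_zero_of_dvd_ne_zero hL hd) hL).mpr hd q
  have hqj : (q : ℤ) ^ d.factorization q ∣ (q : ℤ) ^ L.factorization q := pow_dvd_pow _ hj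
  have hc : ((ordCompl[q] d : ℕ) : ℤ) ∣ ((ordCompl[q] L : ℕ) : ℤ) :=
    Int.natCast_dvd_natCast.mpr (ordCompl_dvd_ordCompl_of_dvd hd q)
  have hqpart : x ≡ y [ZMOD p ^ d.factorization q] :=
    Int.modEq_of_rebase_emod hp.two_le hpq hj <| ((hg x).1.of_dvd hqj).symm.trans <|
      (h.of_dvd (by exact_mod_cast ordProj_dvd d q)).trans ((hg y).1.of_dvd hqj)
  have hcpart : x ≡ y [ZMOD ordCompl[q] d] :=
    ((hg x).2.of_dvd hc).symm.trans <|
      (h.of_dvd (Int.natCast_dvd_natCast.mpr (ordCompl_dvd d q))).trans ((hg y).2.of_dvd hc)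
  have hcop : (p ^ d.factorization q).Coprime (ordCompl[q] d) :=
    (hp.coprime_iff_not_dvd.mpr (not_dvd_ordCompl_of_dvd hd hpL)).pow_left _
  rw [replacePrime, Nat.cast_mul, Nat.cast_pow]
  exact (Int.modEq_and_modEq_iff_modEq_mul
    (by simpa only [Int.natAbs_pow, Int.natAbs_natCast] using hcop)).mp ⟨hqpart, hcpart⟩

end Nat

open Classical in
/-- When `g` misses the class `c`, the representative `0` is arbitrary. -/
noncomputable def preimageClass (g : ℤ → ℤ) (φ : ℕ → ℕ) (c : ℤ × ℕ) : ℤ × ℕ :=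
  (if h : ∃ x, g x ≡ c.1 [ZMOD c.2] then h.choose else 0, φ c.2)

section preimageClass

variable {C : Finset (ℤ × ℕ)} {g : ℤ → ℤ} {φ : ℕ → ℕ}

lemma IsCoveringSystem.image_preimageClass (hC : IsCoveringSystem C)
    (hφ : ∀ c ∈ C, φ c.2 ≠ 0)
    (hg : ∀ c ∈ C, ∀ x y, g x ≡ g y [ZMOD c.2] → x ≡ y [ZMOD φ c.2]) :
    IsCoveringSystem (C.image (preimageClass g φ)) := by
  refine ⟨Finset.forall_mem_image.mpr fun c hc => Nat.one_le_iff_ne_zero.mpr (hφ c hc),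
    fun x => ?_⟩
  obtain ⟨c, hc, hxc⟩ := hC.2 (g x)
  have hgx : g x ≡ c.1 [ZMOD c.2] := (Int.modEq_iff_dvd.mpr hxc).symm
  have hne : ∃ y, g y ≡ c.1 [ZMOD c.2] := ⟨x, hgx⟩
  refine ⟨_, Finset.mem_image_of_mem _ hc, ?_⟩
  rw [preimageClass, dif_pos hne]
  exact Int.modEq_iff_dvd.mp (hg c hc _ _ (hne.choose_spec.trans hgx.symm))

lemma HasDistinctModuli.image_preimageClass (hC : HasDistinctModuli C)
    (hφ : Set.InjOn φ (C.image Prod.snd)) :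
    HasDistinctModuli (C.image (preimageClass g φ)) := by
  simp only [HasDistinctModuli, Finset.forall_mem_image]
  intro c hc c' hc' h
  rw [hC c hc c' hc' (hφ (Finset.mem_image_of_mem _ hc) (Finset.mem_image_of_mem _ hc') h)]

lemma image_snd_image_preimageClass :
    (C.image (preimageClass g φ)).image Prod.snd = (C.image Prod.snd).image φ := by
  simp only [Finset.image_image]
  rfl

end preimageClass

theorem replace_largest_prime_general (m : ℕ)
    (p : ℕ) (hp : p.Prime) (hpm : m ≤ p)
    (L : ℕ) (hL : 0 < L) (hpL : ¬ p ∣ L)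
    (q : ℕ) (hq : q.Prime) (hpq : p < q)
    (h : ∃ C : Finset (ℤ × ℕ), IsCoveringSystem C ∧ HasDistinctModuli C ∧
      C.image Prod.snd = L.divisors.filter (fun d => m ≤ d)) :
    ∃ C : Finset (ℤ × ℕ), IsCoveringSystem C ∧ HasDistinctModuli C ∧
      C.image Prod.snd =
        (p ^ (L.factorization q) * L / q ^ (L.factorization q)).divisors.filter
          (fun d => m ≤ d) := by
  obtain ⟨C, hcov, hdist, hmod⟩ := h
  have hdvd : ∀ d ∈ C.image Prod.snd, d ∣ L := fun d hd => by
    rw [hmod, Finset.mem_filter, Nat.mem_divisors] at hd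
    exact hd.1.1
  have hmodL : ∀ c ∈ C, c.2 ∣ L := fun c hc => hdvd _ (Finset.mem_image_of_mem _ hc)
  have hmod0 : ∀ c ∈ C, c.2 ≠ 0 := fun c hc => ne_zero_of_dvd_ne_zero hL.ne' (hmodL c hc)
  have hcop : IsCoprime ((q : ℤ) ^ L.factorization q) (ordCompl[q] L : ℕ) := by
    exact_mod_cast Nat.isCoprime_iff_coprime.mpr ((Nat.coprime_ordCompl hq hL.ne').pow_left _)
  choose g hg using fun x : ℤ =>
    Int.exists_modEq_and_modEq hcop (Nat.rebase p q (x % p ^ L.factorization q).toNat) x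
  refine ⟨C.image (preimageClass g (Nat.replacePrime q p)),
    hcov.image_preimageClass
      (fun c hc => Nat.replacePrime_ne_zero hp.ne_zero (hmod0 c hc))
      (fun c hc x y => Nat.modEq_replacePrime_of_modEq hp hpq.le hL.ne' hpL hg (hmodL c hc)),
    hdist.image_preimageClass
      ((Nat.replacePrime_injOn hp).mono fun d hd =>
        Nat.not_dvd_ordCompl_of_dvd (hdvd d hd) hpL), ?_⟩
  rw [image_snd_image_preimageClass, hmod,
    Nat.image_replacePrime_divisors_filter_le hp hq hL.ne' hpL hpm (hpm.trans hpq.le),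
    Nat.replacePrime, Nat.mul_div_assoc _ (Nat.ordProj_dvd L q)]

/-- If there is a distinct covering system using exactly the divisors of `L` that are
`≥ m` as moduli, `p ≥ m` is a prime not dividing `L`, and `q > p` is the largest prime
dividing `L`, then there is a distinct covering system using exactly the divisors of
`p^(ν_q(L)) * L / q^(ν_q(L))` that are `≥ m` as moduli. -/
theorem replace_largest_prime (m : ℕ) (hm : 1 ≤ m)
    (p : ℕ) (hp : p.Prime) (hpm : m ≤ p)
    (L : ℕ) (hL : 0 < L) (hpL : ¬ p ∣ L)
    (q : ℕ) (hq : q.Prime) (hpq : p < q) (hqL : q ∣ L)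
    (hqmax : ∀ r : ℕ, r.Prime → r ∣ L → r ≤ q)
    (h : ∃ C : Finset (ℤ × ℕ), IsCoveringSystem C ∧ HasDistinctModuli C ∧
      C.image Prod.snd = L.divisors.filter (fun d => m ≤ d)) :
    ∃ C : Finset (ℤ × ℕ), IsCoveringSystem C ∧ HasDistinctModuli C ∧
      C.image Prod.snd =
        (p ^ (L.factorization q) * L / q ^ (L.factorization q)).divisors.filter
          (fun d => m ≤ d) :=
  replace_largest_prime_general m p hp hpm L hL hpL q hq hpq h
end

section
/- The set of 57 arithmetic progressions {2 mod 6, 6 mod 7, 7 mod 8, 6 mod 9, 4 mod 10, 10 mod 11, 5 mod 12, 5 mod 14, 10 mod 15, 11 mod 16, 12 mod 18, 8 mod 20, 10 mod 21, 9 mod 22, 22 mod 24, 23 mod 25, 18 mod 27, 25 mod 28, 16 mod 30, 19 mod 32, 6 mod 33, 29 mod 35, 21 mod 36, 18 mod 40, 37 mod 42, 41 mod 44, 0 mod 45, 19 mod 48, 18 mod 50, 36 mod 54, 47 mod 55, 21 mod 56, 52 mod 60, 45 mod 63, 27 mod 66, 43 mod 70, 3 mod 72, 63 mod 75, 0 mod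 77, 49 mod 80, 1 mod 84, 73 mod 88, 72 mod 90, 35 mod 96, 58 mod 100, 57 mod 105, 9 mod 108, 57 mod 110, 105 mod 112, 82 mod 120, 9 mod 126, 81 mod 132, 81 mod 135, 133 mod 140, 99 mod 144, 78 mod 150, 133 mod 154, 49 mod 168} is a covering system with pairwise distinct moduli, with minimum modulus 6 and maximum modulus 168. -/
/-- Trifonov's 57 arithmetic progressions. -/
def trifonovSystem : Finset (ℤ × ℕ) :=
  {(2, 6), (6, 7), (7, 8), (6, 9), (4, 10), (10, 11), (5, 12), (5, 14),
   (10, 15), (11, 16), (12, 18), (8, 20), (10, 21), (9, 22), (22, 24),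
   (23, 25), (18, 27), (25, 28), (16, 30), (19, 32), (6, 33), (29, 35),
   (21, 36), (18, 40), (37, 42), (41, 44), (0, 45), (19, 48), (18, 50),
   (36, 54), (47, 55), (21, 56), (52, 60), (45, 63), (27, 66), (43, 70),
   (3, 72), (63, 75), (0, 77), (49, 80), (1, 84), (73, 88), (72, 90),
   (35, 96), (58, 100), (57, 105), (9, 108), (57, 110), (105, 112),
   (82, 120), (9, 126), (81, 132), (81, 135), (133, 140), (99, 144),
   (78, 150), (133, 154), (49, 168)}


lemma testBit_div_pow (x n i : ℕ) : (x / 2^n).testBit i = x.testBit (n + i) := by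
  simp [Nat.testBit_eq_decide_div_mod_eq, Nat.div_div_eq_div_mul, ← pow_add]

lemma two_le_pow {m : ℕ} (hm : 0 < m) : 2 ≤ 2^m :=
  le_trans (by norm_num) (Nat.pow_le_pow_right (by norm_num) hm)

/-- Key recursion: (2^(m+N)-1)/(2^m-1) = 1 + 2^m * ((2^N-1)/(2^m-1)) when m ∣ N. -/
lemma quot_rec (m N : ℕ) (hm : 0 < m) (hN : m ∣ N) :
    (2^(m+N) - 1)/(2^m - 1) = 1 + 2^m * ((2^N - 1)/(2^m - 1)) := by
  have hd : 2^m - 1 ∣ 2^N - 1 := by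
    obtain ⟨k, rfl⟩ := hN
    simpa [pow_mul] using Nat.sub_dvd_pow_sub_pow (2^m) 1 k
  have h1 : (2:ℕ) ≤ 2^m := two_le_pow hm
  have h1N : (1:ℕ) ≤ 2^N := Nat.one_le_two_pow
  obtain ⟨c, hc⟩ := hd
  have key : (2^m - 1) * (1 + 2^m * ((2^N - 1)/(2^m - 1))) = 2^(m+N) - 1 := by
    rw [hc, Nat.mul_div_cancel_left c (by omega), pow_add]
    obtain ⟨a, ha⟩ : ∃ a, 2^m = a + 1 := ⟨2^m - 1, by omega⟩
    obtain ⟨b, hb⟩ : ∃ b, 2^N = b + 1 := ⟨2^N - 1, by omega⟩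
    rw [ha, hb] at hc ⊢
    simp only [Nat.add_sub_cancel] at hc ⊢
    subst hc
    have h : (a+1)*(a*c+1) = a*(1+(a+1)*c) + 1 := by ring
    omega
  rw [← key, Nat.mul_div_cancel_left _ (by omega)]

lemma testBit_quot (m : ℕ) (hm : 0 < m) :
    ∀ N, m ∣ N → ∀ r < N, ((2^N - 1)/(2^m - 1)).testBit r = decide (r % m = 0) := by
  intro N
  induction N using Nat.strong_induction_on with
  | _ N ih =>
    intro hN r hr
    have h1 : (2:ℕ) ≤ 2^m := two_le_pow hm
    obtain ⟨N', rfl⟩ : ∃ N', N = m + N' := ⟨N - m, by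
      have := Nat.le_of_dvd (by omega) hN; omega⟩
    have hN' : m ∣ N' := (Nat.dvd_add_right (dvd_refl m)).mp hN
    rw [quot_rec m N' hm hN']
    by_cases hrm : r < m
    · have e1 : (1 + 2^m * ((2^N' - 1)/(2^m - 1))).testBit r
          = ((1 + 2^m * ((2^N' - 1)/(2^m - 1))) % 2^m).testBit r := by
        rw [Nat.testBit_mod_two_pow]; simp [hrm]
      rw [e1, Nat.add_mul_mod_self_left 1 (2^m) _, Nat.mod_eq_of_lt (by omega)]
      have e2 : Nat.testBit 1 r = decide (r = 0) := by
        cases r with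
        | zero => simp
        | succ n => simp [Nat.testBit_succ]
      rw [e2, Nat.mod_eq_of_lt hrm]
    · push_neg at hrm
      obtain ⟨r', rfl⟩ : ∃ r', r = m + r' := ⟨r - m, by omega⟩
      rw [← testBit_div_pow]
      have hdiv : (1 + 2^m * ((2^N' - 1)/(2^m - 1))) / 2^m = (2^N' - 1)/(2^m - 1) := by
        rw [Nat.add_mul_div_left _ _ (by omega : 0 < 2^m), Nat.div_eq_of_lt (by omega),
          Nat.zero_add]
      rw [hdiv, ih N' (by omega) hN' r' (by omega), Nat.add_mod_left]

def maskOf (N : ℕ) (p : ℕ × ℕ) : ℕ := (2^N - 1)/(2^p.2 - 1) * 2^p.1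

lemma testBit_maskOf (N a m r : ℕ) (hm : 0 < m) (hmN : m ∣ N) (ha : a < m) (hr : r < N) :
    (maskOf N (a, m)).testBit r = decide (r % m = a) := by
  unfold maskOf
  rw [← Nat.shiftLeft_eq, Nat.testBit_shiftLeft]
  by_cases hra : a ≤ r
  · rw [testBit_quot m hm N hmN (r - a) (by omega)]
    simp only [ge_iff_le, hra, decide_true, Bool.true_and, decide_eq_decide]
    constructor
    · intro h
      obtain ⟨k, hk⟩ := Nat.dvd_of_mod_eq_zero h
      have hrk : r = m * k + a := by omega
      rw [hrk, Nat.mul_add_mod, Nat.mod_eq_of_lt ha]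
    · intro h
      exact Nat.sub_mod_eq_zero_of_mod_eq (by rw [h, Nat.mod_eq_of_lt ha])
  · have hne : ¬ (r % m = a) := by
      rw [Nat.mod_eq_of_lt (by omega : r < m)]; omega
    simp [hra, hne]

lemma testBit_foldr (N : ℕ) (L : List (ℕ × ℕ)) (r : ℕ) :
    (L.foldr (fun p acc => maskOf N p ||| acc) 0).testBit r
      = L.any (fun p => (maskOf N p).testBit r) := by
  induction L with
  | nil => simp
  | cons p L ih => simp [Nat.testBit_lor, ih]

lemma cover_check (N : ℕ) (L : List (ℕ × ℕ))
    (hL : ∀ p ∈ L, 0 < p.2 ∧ p.2 ∣ N ∧ p.1 < p.2)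
    (hfold : L.foldr (fun p acc => maskOf N p ||| acc) 0 = 2^N - 1) :
    ∀ r < N, ∃ p ∈ L, r % p.2 = p.1 := by
  intro r hr
  have h := congrArg (fun x => Nat.testBit x r) hfold
  simp only [testBit_foldr, Nat.testBit_two_pow_sub_one, hr, decide_true] at h
  obtain ⟨p, hp, hb⟩ := List.any_eq_true.mp h
  obtain ⟨h0, hdN, hlt⟩ := hL p hp
  rw [show p = (p.1, p.2) from rfl, testBit_maskOf N p.1 p.2 r h0 hdN hlt hr] at hb
  exact ⟨p, hp, of_decide_eq_true hb⟩


/-- The 57 progressions as a list of natural-number pairs. -/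
def trifonovList : List (ℕ × ℕ) :=
  [(2, 6), (6, 7), (7, 8), (6, 9), (4, 10), (10, 11), (5, 12), (5, 14),
   (10, 15), (11, 16), (12, 18), (8, 20), (10, 21), (9, 22), (22, 24),
   (23, 25), (18, 27), (25, 28), (16, 30), (19, 32), (6, 33), (29, 35),
   (21, 36), (18, 40), (37, 42), (41, 44), (0, 45), (19, 48), (18, 50),
   (36, 54), (47, 55), (21, 56), (52, 60), (45, 63), (27, 66), (43, 70),
   (3, 72), (63, 75), (0, 77), (49, 80), (1, 84), (73, 88), (72, 90),
   (35, 96), (58, 100), (57, 105), (9, 108), (57, 110), (105, 112),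
   (82, 120), (9, 126), (81, 132), (81, 135), (133, 140), (99, 144),
   (78, 150), (133, 154), (49, 168)]

set_option exponentiation.threshold 2000000
set_option maxRecDepth 100000

theorem cover_of_period (C : Finset (ℤ × ℕ)) (N : ℕ) (hN : 0 < N)
    (hdvd : ∀ q ∈ C, (q.2 : ℤ) ∣ (N : ℤ))
    (h : ∀ r ∈ Finset.range N, ∃ q ∈ C, (q.2 : ℤ) ∣ (r : ℤ) - q.1) :
    ∀ x : ℤ, ∃ q ∈ C, (q.2 : ℤ) ∣ x - q.1 := by
  intro x
  have hN' : (0 : ℤ) < (N : ℤ) := by exact_mod_cast hN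
  set r : ℤ := x % N with hr
  have h0 : 0 ≤ r := Int.emod_nonneg x (ne_of_gt hN')
  have h1 : r < N := Int.emod_lt_of_pos x hN'
  have hmem : r.toNat ∈ Finset.range N := by
    rw [Finset.mem_range]
    omega
  obtain ⟨q, hq, hdq⟩ := h r.toNat hmem
  refine ⟨q, hq, ?_⟩
  have hrt : ((r.toNat : ℤ)) = r := Int.toNat_of_nonneg h0
  rw [hrt] at hdq
  have hNx : (N : ℤ) ∣ x - r := Int.dvd_self_sub_of_emod_eq rfl
  have h2 : (q.2 : ℤ) ∣ x - r := (hdvd q hq).trans hNx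
  have h3 := dvd_add h2 hdq
  simpa [sub_add_sub_cancel] using h3

theorem trifonov_covers : ∀ x : ℤ, ∃ q ∈ trifonovSystem, (q.2 : ℤ) ∣ x - q.1 := by
  apply cover_of_period trifonovSystem 1663200 (by norm_num) (by decide)
  intro r hr
  rw [Finset.mem_range] at hr
  obtain ⟨p, hp, hmod⟩ := cover_check 1663200 trifonovList (by decide) (by decide) r hr
  have hmem : ((p.1 : ℤ), p.2) ∈ trifonovSystem := by
    fin_cases hp <;> decide
  refine ⟨((p.1 : ℤ), p.2), hmem, ?_⟩
  have hle : p.1 ≤ r := hmod ▸ Nat.mod_le r p.2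
  have hdvd : p.2 ∣ r - p.1 := by
    have := Nat.div_add_mod r p.2
    exact ⟨r / p.2, by omega⟩
  have : ((p.2 : ℤ)) ∣ ((r - p.1 : ℕ) : ℤ) := Int.natCast_dvd_natCast.mpr hdvd
  simpa [Nat.cast_sub hle] using this

/-- The 57 listed progressions form a covering system with pairwise distinct moduli,
minimum modulus 6 and maximum modulus 168. -/
theorem trifonov_example :
    IsCoveringSystem trifonovSystem ∧ HasDistinctModuli trifonovSystem ∧
    (∀ q ∈ trifonovSystem, 6 ≤ q.2 ∧ q.2 ≤ 168) ∧
    (∃ q ∈ trifonovSystem, q.2 = 6) ∧ (∃ q ∈ trifonovSystem, q.2 = 168) := by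
  exact ⟨⟨by decide, trifonov_covers⟩,
    by unfold HasDistinctModuli trifonovSystem; decide, by decide,
    ⟨(2, 6), by decide, rfl⟩, ⟨(49, 168), by decide, rfl⟩⟩
end
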